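/- arXiv:2511.19015 — 2 statements merged into one kernel-verified Lean document; each statement's English description precedes it below -/
import Mathlib

section
/- (Parallel composition for PrDP.) Let X be a countable type, let R₁, …, R_k ⊆ X be pairwise disjoint subsets, and let M₁, …, M_k be mechanisms from datasets over X to measurable spaces Ω₁, …, Ω_k, where each M_i satisfies E_i-PrDP for a privacy budget function E_i : X → ℝ with E_i(r) > 0. Then the mechanism M sending each dataset D to the product measure M₁(D|_{R₁}) ⊗ ⋯ ⊗ M_k(D|_{R_k}), where D|_{R_i} denotes the sub-multiset of records of D that belong to R_i, satisfies E'-PrDP with E'(r) = max{E₁(r), …, E_k(r)}. -/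
open MeasureTheory

/-- A mechanism `M` from datasets (finite multisets) over `X` to a measurable space `Ω`
satisfies `E`-per-record differential privacy if for every dataset `D`, record `r`, and
measurable output set `S`, both `M(D + {r})(S) ≤ exp(E r) · M(D)(S)` and
`M(D)(S) ≤ exp(E r) · M(D + {r})(S)`. -/
def PrDP {X : Type*} {Ω : Type*} [MeasurableSpace Ω]
    (E : X → ℝ) (M : Multiset X → Measure Ω) : Prop :=
  ∀ (D : Multiset X) (r : X) (S : Set Ω), MeasurableSet S →
    M (r ::ₘ D) S ≤ ENNReal.ofReal (Real.exp (E r)) * M D S ∧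
    M D S ≤ ENNReal.ofReal (Real.exp (E r)) * M (r ::ₘ D) S

/-!
A record `r` lies in at most one of the disjoint sets `R i`, so adding `r` to a dataset changes
at most one factor of the product measure: the `i`-th one, by a factor of at most
`exp (E i r) ≤ exp (⨆ j, E j r)`. Product measures are monotone and homogeneous in each factor,
so the product changes by at most the same factor. If `r` lies in no `R i`, nothing changes, and
`1 ≤ exp (⨆ j, E j r)` because the budgets are positive.
-/

open scoped NNReal

namespace MeasureTheory.Measure

variable {ι : Type*} [Fintype ι] {α : ι → Type*} [∀ i, MeasurableSpace (α i)]

theorem pi_mono {μ ν : ∀ i, Measure (α i)} [∀ i, SigmaFinite (μ i)] (h : ∀ i, μ i ≤ ν i) :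
    Measure.pi μ ≤ Measure.pi ν := by
  have hpi : (Measure.pi μ).toOuterMeasure ≤ OuterMeasure.pi fun i => (ν i).toOuterMeasure := by
    rw [OuterMeasure.le_pi]
    intro s _
    calc (Measure.pi μ).toOuterMeasure (Set.pi Set.univ s) = ∏ i, μ i (s i) := pi_pi μ s
      _ ≤ ∏ i, ν i (s i) := Finset.prod_le_prod' fun i _ => h i (s i)
  refine le_iff.2 fun S hS => ?_
  calc Measure.pi μ S ≤ (OuterMeasure.pi fun i => (ν i).toOuterMeasure) S := hpi S
    _ = Measure.pi ν S := by rw [Measure.pi_def, toMeasure_apply _ _ hS]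

theorem pi_smul (ν : ∀ i, Measure (α i)) [∀ i, SigmaFinite (ν i)] (c : ι → ℝ≥0) :
    Measure.pi (fun i => c i • ν i) = (∏ i, c i) • Measure.pi ν :=
  pi_eq fun s _ => by
    simp only [smul_apply, pi_pi, ENNReal.smul_def, smul_eq_mul, ENNReal.ofNNReal_finsetProd,
      Finset.prod_mul_distrib]

theorem pi_le_smul_pi_of_le_smul_of_eq [DecidableEq ι] {μ ν : ∀ i, Measure (α i)}
    [∀ i, SigmaFinite (μ i)] [∀ i, SigmaFinite (ν i)] {i₀ : ι} {c : ℝ≥0}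
    (h₀ : μ i₀ ≤ c • ν i₀) (h : ∀ i ≠ i₀, μ i = ν i) :
    Measure.pi μ ≤ c • Measure.pi ν := by
  calc Measure.pi μ ≤ Measure.pi (fun i => (Pi.mulSingle i₀ c : ι → ℝ≥0) i • ν i) := by
        refine pi_mono fun i => ?_
        rcases eq_or_ne i i₀ with rfl | hi
        · simpa using h₀
        · simp [h i hi, hi]
    _ = c • Measure.pi ν := by
        rw [pi_smul, Finset.prod_pi_mulSingle', if_pos (Finset.mem_univ _)]

end MeasureTheory.Measure

section PrDP

variable {X Ω : Type*} [MeasurableSpace Ω] {E : X → ℝ} {M : Multiset X → Measure Ω}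

theorem PrDP.cons_le_smul (hM : PrDP E M) (D : Multiset X) {r : X} {e : ℝ} (he : E r ≤ e) :
    M (r ::ₘ D) ≤ (Real.exp e).toNNReal • M D :=
  Measure.le_iff.2 fun S hS => (hM D r S hS).1.trans <|
    mul_le_mul_left (ENNReal.ofReal_le_ofReal (Real.exp_le_exp.2 he)) _

theorem PrDP.le_smul_cons (hM : PrDP E M) (D : Multiset X) {r : X} {e : ℝ} (he : E r ≤ e) :
    M D ≤ (Real.exp e).toNNReal • M (r ::ₘ D) :=
  Measure.le_iff.2 fun S hS => (hM D r S hS).2.trans <|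
    mul_le_mul_left (ENNReal.ofReal_le_ofReal (Real.exp_le_exp.2 he)) _

end PrDP

theorem prdp_parallel_composition_general {X : Type*} (k : ℕ)
    (Ω : Fin k → Type*) [∀ i, MeasurableSpace (Ω i)]
    (R : Fin k → Set X) (hdisj : Pairwise (Function.onFun Disjoint R))
    (E : Fin k → X → ℝ) (hE : ∀ i r, 0 < E i r)
    (M : ∀ i : Fin k, Multiset X → Measure (Ω i))
    (hM : ∀ i D, IsProbabilityMeasure (M i D))
    (hPrDP : ∀ i, PrDP (E i) (M i)) :
    PrDP (fun r => ⨆ i, E i r)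
      (fun D => Measure.pi fun i =>
        M i (@Multiset.filter X (fun x => x ∈ R i) (Classical.decPred _) D)) := by
  classical
  intro D r S hS
  have hE_le : ∀ i, E i r ≤ ⨆ j, E j r := le_ciSup (Set.finite_range _).bddAbove
  by_cases hr : ∃ i₀, r ∈ R i₀
  · obtain ⟨i₀, hr₀⟩ := hr
    have hcons : (r ::ₘ D).filter (· ∈ R i₀) = r ::ₘ D.filter (· ∈ R i₀) :=
      Multiset.filter_cons_of_pos _ hr₀
    have hother : ∀ i ≠ i₀, (r ::ₘ D).filter (· ∈ R i) = D.filter (· ∈ R i) := fun i hi =>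
      Multiset.filter_cons_of_neg _ fun hri => Set.disjoint_left.1 (hdisj hi) hri hr₀
    refine ⟨Measure.le_iff'.1 (Measure.pi_le_smul_pi_of_le_smul_of_eq (i₀ := i₀) ?_ ?_) S,
      Measure.le_iff'.1 (Measure.pi_le_smul_pi_of_le_smul_of_eq (i₀ := i₀) ?_ ?_) S⟩
    · rw [hcons]; exact (hPrDP i₀).cons_le_smul _ (hE_le i₀)
    · exact fun i hi => by rw [hother i hi]
    · rw [hcons]; exact (hPrDP i₀).le_smul_cons _ (hE_le i₀)
    · exact fun i hi => by rw [hother i hi]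
  · have hfilter : ∀ i, (r ::ₘ D).filter (· ∈ R i) = D.filter (· ∈ R i) := fun i =>
      Multiset.filter_cons_of_neg _ fun hri => hr ⟨i, hri⟩
    have hone : 1 ≤ ENNReal.ofReal (Real.exp (⨆ i, E i r)) :=
      ENNReal.one_le_ofReal.2 (Real.one_le_exp (Real.iSup_nonneg fun i => (hE i r).le))
    simp only [hfilter]
    exact ⟨le_mul_of_one_le_left zero_le hone, le_mul_of_one_le_left zero_le hone⟩

/-- Parallel composition for PrDP: if `R 0, …, R (k-1) ⊆ X` are pairwise disjoint and each
mechanism `M i` satisfies `E i`-PrDP (with `E i > 0`), then the mechanism sending `D` to the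
product measure `M 0 (D|_{R 0}) ⊗ ⋯ ⊗ M (k-1) (D|_{R (k-1)})`, where `D|_{R i}` is the
sub-multiset of records of `D` belonging to `R i`, satisfies `E'`-PrDP with
`E' r = max_i E i r` (expressed as `⨆ i, E i r` over the nonempty finite index type). -/
theorem prdp_parallel_composition {X : Type*} [Countable X] (k : ℕ) (hk : 0 < k)
    (Ω : Fin k → Type*) [∀ i, MeasurableSpace (Ω i)]
    (R : Fin k → Set X) (hdisj : Pairwise (Function.onFun Disjoint R))
    (E : Fin k → X → ℝ) (hE : ∀ i r, 0 < E i r)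
    (M : ∀ i : Fin k, Multiset X → Measure (Ω i))
    (hM : ∀ i D, IsProbabilityMeasure (M i D))
    (hPrDP : ∀ i, PrDP (E i) (M i)) :
    PrDP (fun r => ⨆ i, E i r)
      (fun D => Measure.pi fun i =>
        M i (@Multiset.filter X (fun x => x ∈ R i) (Classical.decPred _) D)) :=
  prdp_parallel_composition_general k Ω R hdisj E hE M hM hPrDP
end

section
/- (Deterministic error bound for PrLDP counting aggregation.) Let n ≥ 1, ε̌ > 0, β ∈ (0, 1), L ∈ ℕ with L ≥ 1, and define thresholds T_i = √(8·n)·ln(L/β)/(2^{i−1}·ε̌) for i = 1, …, L. Let c₁, …, c_L ≥ 0 be reals, H₁, …, H_L ∈ ℝ with |H_i| < T_i for all i, and let ε_min > 0 satisfy ε_min ≤ 2^L·ε̌ and the property that c_i = 0 for every i with 2^i·ε̌ < ε_min. Define ℓ as the least index i ∈ {1, …, L} with c_i + H_i ≥ T_i if such an index exists, and ℓ = L otherwise. Then 2^{ℓ−1}·ε̌ ≥ ε_min/2 and |Σ_{i=ℓ}^{L} (c_i + H_i) − Σ_{i=1}^{L} c_i| ≤ 12·√(8·n)·ln(L/β)/ε_min.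 -/
/-! Write `S = √(8n)·ln(L/β)`, so that `T i = 2S/(2^i·ε̌)`. The domain `ℓ` is not below
`ε_min` (if it stops, `c ℓ > 0`; otherwise `ℓ = L`), so `2^ℓ·ε̌ ≥ ε_min`. The error is the
noise of the domains `ℓ,…,L` minus the counts of the skipped domains `1,…,ℓ-1`. Every domain
involved with a nonzero term has `2^i·ε̌ ≥ ε_min`, and over such domains the thresholds form
a geometric series bounded by `4S/ε_min`; a skipped domain has `c i < T i - H i < 2 T i`.
This gives `4S/ε_min + 8S/ε_min`. -/

open Finset

lemma sum_Icc_inv_two_pow_le (a b : ℕ) : ∑ i ∈ Icc a b, ((2 : ℝ) ^ i)⁻¹ ≤ 2 * ((2 : ℝ) ^ a)⁻¹ := by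
  rw [← Ico_add_one_right_eq_Icc, sum_Ico_eq_sum_range]
  calc ∑ j ∈ range (b + 1 - a), ((2 : ℝ) ^ (a + j))⁻¹
      = ((2 : ℝ) ^ a)⁻¹ * ∑ j ∈ range (b + 1 - a), (1 / (2 : ℝ)) ^ j := by
        simp only [mul_sum, pow_add, mul_inv, one_div, inv_pow]
    _ ≤ ((2 : ℝ) ^ a)⁻¹ * 2 := by gcongr; exact sum_geometric_two_le _
    _ = 2 * ((2 : ℝ) ^ a)⁻¹ := mul_comm _ _

lemma sum_inv_two_pow_le_of_le_two_pow {t : Finset ℕ} {r : ℝ} (hr : 0 < r)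
    (ht : ∀ i ∈ t, r ≤ 2 ^ i) : ∑ i ∈ t, ((2 : ℝ) ^ i)⁻¹ ≤ 2 / r := by
  rcases t.eq_empty_or_nonempty with rfl | hne
  · rw [sum_empty]; positivity
  set m := t.min' hne
  calc ∑ i ∈ t, ((2 : ℝ) ^ i)⁻¹
      ≤ ∑ i ∈ Icc m (t.max' hne), ((2 : ℝ) ^ i)⁻¹ :=
        sum_le_sum_of_subset_of_nonneg (fun i hi => mem_Icc.mpr ⟨t.min'_le i hi, t.le_max' i hi⟩)
          (fun _ _ _ => by positivity)
    _ ≤ 2 * ((2 : ℝ) ^ m)⁻¹ := sum_Icc_inv_two_pow_le _ _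
    _ ≤ 2 / r := by
        rw [div_eq_mul_inv]
        gcongr
        exact ht m (t.min'_mem hne)

lemma sum_div_two_pow_sub_one_le {S ε εmin : ℝ} (hS : 0 ≤ S) (hε : 0 < ε) (hεmin : 0 < εmin)
    {t : Finset ℕ} (ht : ∀ i ∈ t, 1 ≤ i ∧ εmin ≤ 2 ^ i * ε) :
    ∑ i ∈ t, S / (2 ^ (i - 1) * ε) ≤ 4 * S / εmin := by
  have hterm : ∀ i ∈ t, S / (2 ^ (i - 1) * ε) = 2 * S / ε * ((2 : ℝ) ^ i)⁻¹ := by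
    intro i hi
    have hi1 := (ht i hi).1
    rw [← mul_pow_sub_one (show i ≠ 0 by omega) (2 : ℝ)]
    field_simp
  have hr : ∀ i ∈ t, εmin / ε ≤ 2 ^ i := fun i hi => (div_le_iff₀ hε).mpr (ht i hi).2
  calc ∑ i ∈ t, S / (2 ^ (i - 1) * ε)
      = 2 * S / ε * ∑ i ∈ t, ((2 : ℝ) ^ i)⁻¹ := by rw [sum_congr rfl hterm, mul_sum]
    _ ≤ 2 * S / ε * (2 / (εmin / ε)) := by
        gcongr; exact sum_inv_two_pow_le_of_le_two_pow (by positivity) hr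
    _ = 4 * S / εmin := by field_simp; ring

section Protocol

variable {L ℓ : ℕ} {S ε εmin : ℝ} {T c H : ℕ → ℝ}

lemma le_two_pow_mul_of_stop (hH : ∀ i ∈ Icc 1 L, |H i| < T i) (hεminU : εmin ≤ 2 ^ L * ε)
    (hzero : ∀ i ∈ Icc 1 L, 2 ^ i * ε < εmin → c i = 0) (hℓmem : ℓ ∈ Icc 1 L)
    (hℓ : T ℓ ≤ c ℓ + H ℓ ∨ ℓ = L) : εmin ≤ 2 ^ ℓ * ε := by
  rcases hℓ with hpass | rfl
  · by_contra! hbelow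
    have hnoise := (abs_lt.mp (hH ℓ hℓmem)).2
    rw [hzero ℓ hℓmem hbelow] at hpass
    linarith
  · exact hεminU

lemma sum_Icc_abs_noise_le (hT : ∀ i ∈ Icc 1 L, T i = S / (2 ^ (i - 1) * ε))
    (hH : ∀ i ∈ Icc 1 L, |H i| < T i) (hS : 0 ≤ S) (hε : 0 < ε) (hεmin : 0 < εmin)
    (hℓ1 : 1 ≤ ℓ) (hstop : εmin ≤ 2 ^ ℓ * ε) :
    ∑ i ∈ Icc ℓ L, |H i| ≤ 4 * S / εmin := by
  have hsub : Icc ℓ L ⊆ Icc 1 L := Icc_subset_Icc_left hℓ1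
  calc ∑ i ∈ Icc ℓ L, |H i| ≤ ∑ i ∈ Icc ℓ L, S / (2 ^ (i - 1) * ε) :=
        sum_le_sum fun i hi => hT i (hsub hi) ▸ (hH i (hsub hi)).le
    _ ≤ 4 * S / εmin := by
        refine sum_div_two_pow_sub_one_le hS hε hεmin fun i hi => ?_
        have hℓi := (mem_Icc.mp hi).1
        exact ⟨hℓ1.trans hℓi, hstop.trans (by gcongr; norm_num)⟩

lemma sum_Ico_skipped_counts_le (hT : ∀ i ∈ Icc 1 L, T i = S / (2 ^ (i - 1) * ε))
    (hH : ∀ i ∈ Icc 1 L, |H i| < T i) (hS : 0 ≤ S) (hε : 0 < ε) (hεmin : 0 < εmin)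
    (hzero : ∀ i ∈ Icc 1 L, 2 ^ i * ε < εmin → c i = 0) (hℓL : ℓ ≤ L)
    (hskip : ∀ i ∈ Ico 1 ℓ, c i + H i < T i) :
    ∑ i ∈ Ico 1 ℓ, c i ≤ 8 * S / εmin := by
  have hsub : Ico 1 ℓ ⊆ Icc 1 L := Ico_subset_Icc_self.trans (Icc_subset_Icc_right hℓL)
  set t := (Ico 1 ℓ).filter fun i => εmin ≤ 2 ^ i * ε
  have hcount : ∀ i ∈ Ico 1 ℓ,
      c i ≤ if εmin ≤ 2 ^ i * ε then 2 * (S / (2 ^ (i - 1) * ε)) else 0 := by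
    intro i hi
    split_ifs with hi'
    · have hnoise := (abs_lt.mp (hH i (hsub hi))).1
      have := hskip i hi
      rw [hT i (hsub hi)] at hnoise this
      linarith
    · exact (hzero i (hsub hi) (not_le.mp hi')).le
  calc ∑ i ∈ Ico 1 ℓ, c i ≤ ∑ i ∈ t, 2 * (S / (2 ^ (i - 1) * ε)) := by
        rw [sum_filter]; exact sum_le_sum hcount
    _ = 2 * ∑ i ∈ t, S / (2 ^ (i - 1) * ε) := (mul_sum _ _ _).symm
    _ ≤ 2 * (4 * S / εmin) := by
        gcongr
        refine sum_div_two_pow_sub_one_le hS hε hεmin fun i hi => ?_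
        obtain ⟨hi, hi'⟩ := mem_filter.mp hi
        exact ⟨(mem_Ico.mp hi).1, hi'⟩
    _ = 8 * S / εmin := by ring

end Protocol

lemma sum_Icc_add_sub_sum_Icc_eq {ℓ L : ℕ} (c H : ℕ → ℝ) (hℓ1 : 1 ≤ ℓ) (hℓL : ℓ ≤ L) :
    (∑ i ∈ Icc ℓ L, (c i + H i)) - ∑ i ∈ Icc 1 L, c i =
      (∑ i ∈ Icc ℓ L, H i) - ∑ i ∈ Ico 1 ℓ, c i := by
  rw [sum_add_distrib, ← Ico_add_one_right_eq_Icc 1 L, ← Ico_add_one_right_eq_Icc ℓ L,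
    ← sum_Ico_consecutive c hℓ1 (by omega : ℓ ≤ L + 1)]
  ring

theorem prldp_count_error_bound_general
    (n : ℕ)
    (εcheck β : ℝ) (hεcheck : 0 < εcheck) (hβ : β ∈ Set.Ioo (0 : ℝ) 1)
    (L : ℕ) (hL : 1 ≤ L)
    (T : ℕ → ℝ)
    (hT : ∀ i ∈ Finset.Icc 1 L,
      T i = Real.sqrt (8 * n) * Real.log (L / β) / (2 ^ (i - 1) * εcheck))
    (c H : ℕ → ℝ)
    (hc : ∀ i ∈ Finset.Icc 1 L, 0 ≤ c i)
    (hH : ∀ i ∈ Finset.Icc 1 L, |H i| < T i)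
    (εmin : ℝ) (hεmin : 0 < εmin) (hεminU : εmin ≤ 2 ^ L * εcheck)
    (hzero : ∀ i ∈ Finset.Icc 1 L, 2 ^ i * εcheck < εmin → c i = 0)
    (ℓ : ℕ) (hℓmem : ℓ ∈ Finset.Icc 1 L)
    (hℓ : (T ℓ ≤ c ℓ + H ℓ ∧ ∀ i ∈ Finset.Icc 1 L, i < ℓ → c i + H i < T i) ∨
          (ℓ = L ∧ ∀ i ∈ Finset.Icc 1 L, c i + H i < T i)) :
    εmin / 2 ≤ 2 ^ (ℓ - 1) * εcheck ∧
    |(∑ i ∈ Finset.Icc ℓ L, (c i + H i)) - ∑ i ∈ Finset.Icc 1 L, c i| ≤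
      12 * Real.sqrt (8 * n) * Real.log (L / β) / εmin := by
  obtain ⟨hℓ1, hℓL⟩ := mem_Icc.mp hℓmem
  have hS : 0 ≤ Real.sqrt (8 * n) * Real.log (L / β) := by
    refine mul_nonneg (Real.sqrt_nonneg _) (Real.log_nonneg ?_)
    rw [one_le_div hβ.1]
    exact hβ.2.le.trans (by exact_mod_cast hL)
  have hstop : εmin ≤ 2 ^ ℓ * εcheck :=
    le_two_pow_mul_of_stop hH hεminU hzero hℓmem (hℓ.imp And.left And.left)
  have hsub : Ico 1 ℓ ⊆ Icc 1 L := Ico_subset_Icc_self.trans (Icc_subset_Icc_right hℓL)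
  have hskip : ∀ i ∈ Ico 1 ℓ, c i + H i < T i := fun i hi => by
    rcases hℓ with ⟨-, hbefore⟩ | ⟨-, hall⟩
    exacts [hbefore i (hsub hi) (mem_Ico.mp hi).2, hall i (hsub hi)]
  have hsum_c : 0 ≤ ∑ i ∈ Ico 1 ℓ, c i := sum_nonneg fun i hi => hc i (hsub hi)
  refine ⟨by rw [← mul_pow_sub_one (by omega) (2 : ℝ)] at hstop; linarith, ?_⟩
  rw [sum_Icc_add_sub_sum_Icc_eq c H hℓ1 hℓL]
  calc _ ≤ |∑ i ∈ Icc ℓ L, H i| + |∑ i ∈ Ico 1 ℓ, c i| := abs_sub _ _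
    _ ≤ ∑ i ∈ Icc ℓ L, |H i| + ∑ i ∈ Ico 1 ℓ, c i := by
        rw [abs_of_nonneg hsum_c]; gcongr; exact abs_sum_le_sum_abs _ _
    _ ≤ 4 * _ / εmin + 8 * _ / εmin :=
        add_le_add (sum_Icc_abs_noise_le hT hH hS hεcheck hεmin hℓ1 hstop)
          (sum_Ico_skipped_counts_le hT hH hS hεcheck hεmin hzero hℓL hskip)
    _ = _ := by ring

/-- Deterministic error bound for PrLDP counting aggregation (Algorithms 3 and 4):
with `n ≥ 1` parties, thresholds `T i = √(8n)·ln(L/β)/(2^(i-1)·ε̌)`, counts `c i ≥ 0`,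
aggregated noises `|H i| < T i`, and `ε_min > 0` such that `ε_min ≤ 2^L·ε̌` and `c i = 0`
whenever `2^i·ε̌ < ε_min`, if `ℓ` is the least index `i ∈ {1,…,L}` with `c i + H i ≥ T i`
when such an index exists and `ℓ = L` otherwise, then `2^(ℓ-1)·ε̌ ≥ ε_min/2` and
`|∑_{i=ℓ}^{L} (c i + H i) − ∑_{i=1}^{L} c i| ≤ 12·√(8n)·ln(L/β)/ε_min`. -/
theorem prldp_count_error_bound
    (n : ℕ) (hn : 1 ≤ n)
    (εcheck β : ℝ) (hεcheck : 0 < εcheck) (hβ : β ∈ Set.Ioo (0 : ℝ) 1)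
    (L : ℕ) (hL : 1 ≤ L)
    (T : ℕ → ℝ)
    (hT : ∀ i ∈ Finset.Icc 1 L,
      T i = Real.sqrt (8 * n) * Real.log (L / β) / (2 ^ (i - 1) * εcheck))
    (c H : ℕ → ℝ)
    (hc : ∀ i ∈ Finset.Icc 1 L, 0 ≤ c i)
    (hH : ∀ i ∈ Finset.Icc 1 L, |H i| < T i)
    (εmin : ℝ) (hεmin : 0 < εmin) (hεminU : εmin ≤ 2 ^ L * εcheck)
    (hzero : ∀ i ∈ Finset.Icc 1 L, 2 ^ i * εcheck < εmin → c i = 0)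
    (ℓ : ℕ) (hℓmem : ℓ ∈ Finset.Icc 1 L)
    (hℓ : (T ℓ ≤ c ℓ + H ℓ ∧ ∀ i ∈ Finset.Icc 1 L, i < ℓ → c i + H i < T i) ∨
          (ℓ = L ∧ ∀ i ∈ Finset.Icc 1 L, c i + H i < T i)) :
    εmin / 2 ≤ 2 ^ (ℓ - 1) * εcheck ∧
    |(∑ i ∈ Finset.Icc ℓ L, (c i + H i)) - ∑ i ∈ Finset.Icc 1 L, c i| ≤
      12 * Real.sqrt (8 * n) * Real.log (L / β) / εmin :=
  prldp_count_error_bound_general n εcheck β hεcheck hβ L hL T hT c H hc hH εmin hεmin hεminU hzero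
    ℓ hℓmem hℓ
end
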